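/- arXiv:2301.03683 — 2 statements merged into one kernel-verified Lean document; each statement's English description precedes it below -/
import Mathlib

section
/- Let (g,γ) be a construction pair on an abelian group (X,+), let n ≥ 1 be an integer, and define F : ℤ × ℤ × X × X → X by F(i,j,x,y) = g^{−j}(x)+y+∑_{k∈I(i+j,−j)} g^{−k}(γ(x,y)). Then the following are equivalent: (i) F(i+n,j,x,y) = F(i,j,x,y) and F(i,j+n,x,y) = F(i,j,x,y) for all integers i,j and all x,y ∈ X; (ii) g^n = id and ∑_{0≤k<n} g^k(x) ∈ rad γ for every x ∈ X. -/
/-- The interval `I(i,j)` of integers: `∅` if `i = j`, `{i,…,j-1}` if `i < j`,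
and `{j,…,i-1}` if `j < i`. -/
noncomputable def I (i j : ℤ) : Finset ℤ := Finset.Ico (min i j) (max i j)

/-- The radical of a symmetric mapping `γ : X × X → X`. -/
def radical {X : Type*} [AddCommGroup X] (γ : X → X → X) : Set X :=
  {x | ∀ y, γ x y = 0}

/-- A construction pair `(g, γ)` on an abelian group `(X, +)`. -/
structure IsConstructionPair {X : Type*} [AddCommGroup X]
    (g : Equiv.Perm X) (γ : X → X → X) : Prop where
  symm : ∀ x y, γ x y = γ y x
  alt : ∀ x, γ x x = 0
  add_left : ∀ x y z, γ (x + y) z = γ x z + γ y z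
  add_right : ∀ x y z, γ x (y + z) = γ x y + γ x z
  c1 : ∀ x y, g⁻¹ (g x + g y)
      = x + y + γ x y + g⁻¹ (γ x y) + g⁻¹ (g⁻¹ (γ x y))
  c2 : ∀ x y z, γ (γ x y) z = 0
  c3 : ∀ x y, g⁻¹ (γ x y) = γ (g x) y

/-! By (C3), `g^{-k}(γ(x,y)) = γ(g^k x, y)`, so the sum in `F` is an interval sum of
`f k = γ(g^k x, y)`. This `f` takes values of order two (`γ` is alternating and symmetric), and for
such functions interval sums over `I` are additive along any three endpoints `a, b, c`, whatever
their order. Condition (ii) says exactly that `g^{-n} = 1` and that `f` sums to zero over every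
window of length `n`; the latter makes the `I`-sums invariant under shifting an endpoint by `n`,
which is the periodicity (i). Conversely (i) at `(i,j) = (0,0)` with `y = 0` and with general `y`
gives back the two parts of (ii). -/

open Finset

lemma I_comm (a b : ℤ) : I a b = I b a := by
  rw [I, I, min_comm, max_comm]

lemma I_eq_Ico {a b : ℤ} (hab : a ≤ b) : I a b = Ico a b := by
  rw [I, min_eq_left hab, max_eq_right hab]

lemma I_self (a : ℤ) : I a a = ∅ := by
  simp [I]

section IntervalSums

variable {M : Type*} [AddCommGroup M] {f : ℤ → M}

lemma sum_Ico_add_sum_Ico (f : ℤ → M) {a b c : ℤ} (hab : a ≤ b) (hbc : b ≤ c) :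
    ∑ k ∈ Ico a b, f k + ∑ k ∈ Ico b c, f k = ∑ k ∈ Ico a c, f k := by
  rw [← sum_union (Ico_disjoint_Ico_consecutive a b c), Ico_union_Ico_eq_Ico hab hbc]

lemma sum_add_self_eq_zero (htor : ∀ k, f k + f k = 0) (s : Finset ℤ) :
    ∑ k ∈ s, f k + ∑ k ∈ s, f k = 0 := by
  rw [← sum_add_distrib]
  exact sum_eq_zero fun k _ => htor k

/-- For 2-torsion values, `I a b` behaves like the symmetric difference of `[m, a)` and `[m, b)`. -/
lemma sum_I_eq_sum_Ico_add_sum_Ico (htor : ∀ k, f k + f k = 0) {m a b : ℤ}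
    (hma : m ≤ a) (hmb : m ≤ b) :
    ∑ k ∈ I a b, f k = ∑ k ∈ Ico m a, f k + ∑ k ∈ Ico m b, f k := by
  wlog hab : a ≤ b generalizing a b
  · rw [I_comm, add_comm]
    exact this hmb hma (le_of_not_ge hab)
  rw [I_eq_Ico hab, ← sum_Ico_add_sum_Ico f hma hab, ← add_assoc,
    sum_add_self_eq_zero htor, zero_add]

lemma sum_I_add_sum_I (htor : ∀ k, f k + f k = 0) (a b c : ℤ) :
    ∑ k ∈ I a b, f k + ∑ k ∈ I b c, f k = ∑ k ∈ I a c, f k := by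
  have hsplit (x y : ℤ) (hx : min a (min b c) ≤ x) (hy : min a (min b c) ≤ y) :=
    sum_I_eq_sum_Ico_add_sum_Ico htor hx hy
  rw [hsplit a b (by omega) (by omega), hsplit b c (by omega) (by omega),
    hsplit a c (by omega) (by omega), add_assoc, ← add_assoc (∑ k ∈ Ico _ b, f k),
    sum_add_self_eq_zero htor, zero_add]

variable {n : ℤ} (htor : ∀ k, f k + f k = 0) (hn : 0 ≤ n)
  (hwindow : ∀ a, ∑ k ∈ Ico a (a + n), f k = 0)
include htor hn hwindow

lemma sum_I_add_left (a b : ℤ) : ∑ k ∈ I (a + n) b, f k = ∑ k ∈ I a b, f k := by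
  rw [← sum_I_add_sum_I htor (a + n) a b, I_comm, I_eq_Ico (by omega), hwindow, zero_add]

lemma sum_I_add_right (a b : ℤ) : ∑ k ∈ I a (b + n), f k = ∑ k ∈ I a b, f k := by
  rw [I_comm, sum_I_add_left htor hn hwindow, I_comm]

end IntervalSums

lemma Equiv.Perm.sum_Ico_zpow_apply {X : Type*} [AddCommMonoid X] (g : Equiv.Perm X)
    (a n : ℤ) (x : X) :
    ∑ k ∈ Ico a (a + n), (g ^ k) x = ∑ k ∈ Ico 0 n, (g ^ k) ((g ^ a) x) := by
  have hshift := sum_Ico_add' (fun k => (g ^ k) x) 0 n a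
  rw [zero_add, add_comm n a] at hshift
  rw [← hshift]
  simp only [zpow_add, Equiv.Perm.mul_apply]

namespace IsConstructionPair

variable {X : Type*} [AddCommGroup X] {g : Equiv.Perm X} {γ : X → X → X}
  (h : IsConstructionPair g γ)
include h

lemma zero_right (x : X) : γ x 0 = 0 := by
  simpa using h.add_right x 0 0

lemma add_self (x y : X) : γ x y + γ x y = 0 := by
  simpa [h.add_left, h.add_right, h.alt, h.symm y x] using h.alt (x + y)

lemma sum_left (s : Finset ℤ) (v : ℤ → X) (y : X) :
    γ (∑ k ∈ s, v k) y = ∑ k ∈ s, γ (v k) y :=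
  map_sum (AddMonoidHom.mk' (γ · y) (h.add_left · · y)) v s

lemma apply_eq_inv_left (x y : X) : g (γ x y) = γ (g⁻¹ x) y := by
  simpa using congrArg g (h.c3 (g⁻¹ x) y).symm

lemma zpow_neg_apply (k : ℤ) (x y : X) : (g ^ (-k)) (γ x y) = γ ((g ^ k) x) y := by
  induction k using Int.induction_on generalizing x with
  | zero => simp
  | succ k ih =>
    rw [neg_add, zpow_add, zpow_neg_one, Equiv.Perm.mul_apply, h.c3, ih, zpow_add_one,
      Equiv.Perm.mul_apply]
  | pred k ih =>
    rw [neg_neg] at ih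
    rw [neg_sub, sub_neg_eq_add, add_comm, zpow_add_one, Equiv.Perm.mul_apply,
      h.apply_eq_inv_left, ih, ← Equiv.Perm.mul_apply, ← zpow_sub_one]

end IsConstructionPair

theorem stmt_7 {X : Type*} [AddCommGroup X] (g : Equiv.Perm X) (γ : X → X → X)
    (h : IsConstructionPair g γ) (n : ℤ) (hn : 1 ≤ n)
    (F : ℤ → ℤ → X → X → X)
    (hF : ∀ (i j : ℤ) (x y : X),
      F i j x y = (g ^ (-j)) x + y + ∑ k ∈ I (i + j) (-j), (g ^ (-k)) (γ x y)) :
    (∀ (i j : ℤ) (x y : X),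
        F (i + n) j x y = F i j x y ∧ F i (j + n) x y = F i j x y)
      ↔ (g ^ n = 1 ∧ ∀ x : X, ∑ k ∈ Finset.Ico (0 : ℤ) n, (g ^ k) x ∈ radical γ) := by
  have hn0 : 0 ≤ n := by omega
  have hF' (i j : ℤ) (x y : X) :
      F i j x y = (g ^ (-j)) x + y + ∑ k ∈ I (i + j) (-j), γ ((g ^ k) x) y := by
    simp only [hF, h.zpow_neg_apply]
  constructor
  · intro hper
    refine ⟨?_, fun x y => ?_⟩
    · have hinv : g ^ (-n) = 1 := Equiv.ext fun x => by
        simpa [hF', h.zero_right] using (hper 0 0 x 0).2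
      rwa [zpow_neg, inv_eq_one] at hinv
    · have hsum := (hper 0 0 x y).1
      simp only [hF', zero_add, add_zero, neg_zero, zpow_zero, I_self, sum_empty,
        add_eq_left] at hsum
      rw [I_comm, I_eq_Ico hn0] at hsum
      rw [h.sum_left, hsum]
  · rintro ⟨hg, hrad⟩ i j x y
    have htor (k : ℤ) := h.add_self ((g ^ k) x) y
    have hwindow (a : ℤ) : ∑ k ∈ Ico a (a + n), γ ((g ^ k) x) y = 0 := by
      rw [← h.sum_left, Equiv.Perm.sum_Ico_zpow_apply]
      exact hrad _ y
    have hgj : g ^ (-(j + n)) = g ^ (-j) := by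
      rw [neg_add, zpow_add, zpow_neg g n, hg, inv_one, mul_one]
    have hright := sum_I_add_right htor hn0 hwindow (i + j) (-(j + n))
    rw [show -(j + n) + n = -j by ring] at hright
    refine ⟨?_, ?_⟩
    · rw [hF', hF', add_right_comm i n j, sum_I_add_left htor hn0 hwindow]
    · rw [hF', hF', hgj, ← add_assoc, sum_I_add_left htor hn0 hwindow, hright]
end

section
/- Let (g,γ) be a construction pair on an abelian group (X,+), and equip ℤ × X with the multiplication (i,x)·(j,y) = (i+j, g^{−j}(x)+y+∑_{k∈I(i+j,−j)} g^{−k}(γ(x,y))). For integers i,j,k and x,y,z ∈ X, set u = ∑_{t∈I(i+j,i+j+k)} g^{−t}(γ(x,y)) + ∑_{t∈I(i+k,i+j+k)} g^{−t}(γ(x,z)) + ∑_{t∈I(j+k,i+j+k)} g^{−t}(γ(y,z)). Then ((i,x)·((j,y)·(k,z)))·(0,u) = ((i,x)·(j,y))·(k,z); that is, (0,u) is the loop associator [(i,x),(j,y),(k,z)]. -/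
/-- The multiplication of `ℤ ⋉_{(g,γ)} X` on `ℤ × X`:
`(i,x)·(j,y) = (i+j, g^{-j}(x) + y + ∑_{k ∈ I(i+j,-j)} g^{-k}(γ(x,y)))`. -/
noncomputable def cmul {X : Type*} [AddCommGroup X] (g : Equiv.Perm X) (γ : X → X → X) :
    ℤ × X → ℤ × X → ℤ × X :=
  fun u v =>
    (u.1 + v.1,
      (g ^ (-v.1)) u.2 + v.2 + ∑ k ∈ I (u.1 + v.1) (-v.1), (g ^ (-k)) (γ u.2 v.2))

/-!
Let `R = {c | ∀ w, γ w c = 0}` be the radical of `γ`. By (C2) it contains every value of `γ`,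
by (C3) it is `g`-stable, and by (C1) `g` is additive on translates by `R`. Rewriting (C1) as
`g (a + b) = g a + g b + ∑_{t ∈ I(2,-1)} g^{-t} γ(a,b)` and composing, one gets the expansion
`g^n (a + b) = g^n a + g^n b + ∑_{t ∈ I(2n,-n)} g^{-t} γ(a,b)` for every `n ∈ ℤ`.
The summands `g^{-t} γ(a,b) = γ(g^t a, b)` are 2-torsion, and `I(p,r)` is the symmetric difference
of `I(p,q)` and `I(q,r)`, so the sums `S(p,q) = ∑_{t ∈ I(p,q)} g^{-t} γ(a,b)` (`orbitSum`)
satisfy `S(p,q) + S(q,r) = S(p,r)`.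
With these rules both triple products reduce to the same normal form, up to the central
correction `u ∈ R`, which `(0,u)` adds on the right.
-/

open Finset

theorem Int.add_induction {P : ℤ → Prop} (one : P 1) (neg_one : P (-1))
    (add : ∀ m n, P m → P n → P (m + n)) (n : ℤ) : P n := by
  induction n using Int.induction_on with
  | zero => simpa using add 1 (-1) one neg_one
  | succ n ih => exact add _ _ ih one
  | pred n ih => simpa [sub_eq_add_neg] using add _ _ ih neg_one

theorem Finset.sum_symmDiff_of_add_self_eq_zero {ι M : Type*} [DecidableEq ι] [AddCommGroup M]
    {f : ι → M} (hf : ∀ i, f i + f i = 0) (s t : Finset ι) :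
    ∑ i ∈ symmDiff s t, f i = ∑ i ∈ s, f i + ∑ i ∈ t, f i := by
  have hinter : ∑ i ∈ s ∩ t, f i + ∑ i ∈ s ∩ t, f i = 0 := by
    rw [← sum_add_distrib]
    exact sum_eq_zero fun i _ => hf i
  rw [symmDiff_eq_sup_sdiff_inf, sup_eq_union, inf_eq_inter, ← sum_union_inter,
    ← sum_sdiff (f := f) inter_subset_union, add_assoc, hinter, add_zero]

theorem I_comm_s11 (p q : ℤ) : I p q = I q p := by
  rw [I, I, min_comm, max_comm]

theorem I_symmDiff_I (p q r : ℤ) : symmDiff (I p q) (I q r) = I p r := by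
  ext t
  simp only [I, mem_symmDiff, mem_Ico]
  omega

theorem I_eq_map_addRightEmbedding (p q m : ℤ) :
    I p q = (I (p - m) (q - m)).map (addRightEmbedding m) := by
  rw [I, I, min_sub_sub_right, max_sub_sub_right, map_add_right_Ico, sub_add_cancel,
    sub_add_cancel]

section OrbitSum

variable {X : Type*} [AddCommGroup X]

noncomputable def orbitSum (g : Equiv.Perm X) (p q : ℤ) (c : X) : X :=
  ∑ t ∈ I p q, (g ^ (-t)) c

theorem orbitSum_comm (g : Equiv.Perm X) (p q : ℤ) (c : X) :
    orbitSum g p q c = orbitSum g q p c := by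
  rw [orbitSum, I_comm_s11, orbitSum]

theorem orbitSum_self (g : Equiv.Perm X) (p : ℤ) (c : X) : orbitSum g p p c = 0 := by
  simp [orbitSum, I]

theorem orbitSum_zpow_apply (g : Equiv.Perm X) (m p q : ℤ) (c : X) :
    orbitSum g p q ((g ^ m) c) = orbitSum g (p - m) (q - m) c := by
  rw [orbitSum, I_eq_map_addRightEmbedding p q m, sum_map, orbitSum]
  refine sum_congr rfl fun t _ => ?_
  rw [← Equiv.Perm.mul_apply, ← zpow_add, addRightEmbedding_apply, neg_add,
    neg_add_cancel_right]

theorem orbitSum_zero_three (g : Equiv.Perm X) (c : X) :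
    orbitSum g 0 3 c = c + g⁻¹ c + g⁻¹ (g⁻¹ c) := by
  rw [orbitSum, show I 0 3 = {0, 1, 2} from rfl, sum_insert (by decide), sum_insert (by decide),
    sum_singleton, ← add_assoc]
  simp [zpow_neg, sq, Equiv.Perm.mul_apply]

theorem cmul_mk {g : Equiv.Perm X} {γ : X → X → X} (a b : ℤ) (v w : X) :
    cmul g γ (a, v) (b, w) = (a + b, (g ^ (-b)) v + w + orbitSum g (a + b) (-b) (γ v w)) :=
  rfl

end OrbitSum

namespace IsConstructionPair

variable {X : Type*} [AddCommGroup X] {g : Equiv.Perm X} {γ : X → X → X}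

theorem gamma_zero_right (h : IsConstructionPair g γ) (x : X) : γ x 0 = 0 := by
  simpa using h.add_right x 0 0

theorem gamma_add_self (h : IsConstructionPair g γ) (x y : X) : γ x y + γ x y = 0 := by
  simpa [h.add_left, h.add_right, h.alt, h.symm y x] using h.alt (x + y)

theorem gamma_zpow_apply_left (h : IsConstructionPair g γ) (n : ℤ) (x y : X) :
    γ ((g ^ n) x) y = (g ^ (-n)) (γ x y) := by
  induction n using Int.add_induction generalizing x with
  | one => simpa using (h.c3 x y).symm
  | neg_one =>
    have := h.c3 (g⁻¹ x) y
    rw [Equiv.Perm.inv_eq_iff_eq] at this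
    simpa using this
  | add m n hm hn =>
    rw [zpow_add, Equiv.Perm.mul_apply, hm, hn, ← Equiv.Perm.mul_apply, ← zpow_add, neg_add]

theorem gamma_zpow_apply_right (h : IsConstructionPair g γ) (n : ℤ) (x y : X) :
    γ x ((g ^ n) y) = (g ^ (-n)) (γ x y) := by
  rw [h.symm, h.gamma_zpow_apply_left, h.symm]

theorem zpow_apply_zero (h : IsConstructionPair g γ) (n : ℤ) : (g ^ n) (0 : X) = 0 := by
  simpa [h.alt, h.gamma_zero_right] using (h.gamma_zpow_apply_left (-n) 0 0).symm

theorem inv_apply_zero (h : IsConstructionPair g γ) : g⁻¹ (0 : X) = 0 := by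
  simpa using h.zpow_apply_zero (-1)

def radical (h : IsConstructionPair g γ) : AddSubgroup X where
  carrier := {c | ∀ w, γ w c = 0}
  zero_mem' := h.gamma_zero_right
  add_mem' {c d} hc hd w := by
    rw [h.add_right, hc w, hd w, add_zero]
  neg_mem' {c} hc w := by
    simpa [h.add_right, hc w, h.gamma_zero_right] using (h.add_right w c (-c)).symm

theorem gamma_eq_zero_of_mem_radical_left (h : IsConstructionPair g γ) {c : X}
    (hc : c ∈ h.radical) (w : X) : γ c w = 0 := by
  rw [h.symm, hc w]

theorem gamma_mem_radical (h : IsConstructionPair g γ) (x y : X) : γ x y ∈ h.radical :=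
  fun w => by rw [h.symm, h.c2]

theorem zpow_apply_mem_radical (h : IsConstructionPair g γ) (n : ℤ) {c : X}
    (hc : c ∈ h.radical) : (g ^ n) c ∈ h.radical :=
  fun w => by rw [h.gamma_zpow_apply_right, hc w, h.zpow_apply_zero]

theorem apply_add_of_mem_radical (h : IsConstructionPair g γ) (a : X) {c : X}
    (hc : c ∈ h.radical) : g (a + c) = g a + g c := by
  have := h.c1 a c
  rw [hc a, h.inv_apply_zero, h.inv_apply_zero, add_zero, add_zero, add_zero,
    Equiv.Perm.inv_eq_iff_eq] at this
  exact this.symm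

theorem zpow_apply_add_of_mem_radical (h : IsConstructionPair g γ) (n : ℤ) (a : X) {c : X}
    (hc : c ∈ h.radical) : (g ^ n) (a + c) = (g ^ n) a + (g ^ n) c := by
  induction n using Int.add_induction generalizing a c with
  | one => simpa using h.apply_add_of_mem_radical a hc
  | neg_one =>
    have hc' := h.zpow_apply_mem_radical (-1) hc
    rw [zpow_neg_one] at hc' ⊢
    rw [Equiv.Perm.inv_eq_iff_eq, h.apply_add_of_mem_radical _ hc']
    simp
  | add m n hm hn =>
    rw [zpow_add, Equiv.Perm.mul_apply, hn a hc, hm _ (h.zpow_apply_mem_radical n hc)]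
    rfl

theorem zpow_apply_sum_of_mem_radical (h : IsConstructionPair g γ) (n : ℤ) {ι : Type*}
    (s : Finset ι) {f : ι → X} (hf : ∀ i ∈ s, f i ∈ h.radical) :
    (g ^ n) (∑ i ∈ s, f i) = ∑ i ∈ s, (g ^ n) (f i) := by
  classical
  induction s using Finset.induction_on with
  | empty => simp [h.zpow_apply_zero]
  | insert i s hi ih =>
    rw [sum_insert hi, sum_insert hi, add_comm,
      h.zpow_apply_add_of_mem_radical _ _ (hf i (mem_insert_self i s)),
      ih fun j hj => hf j (mem_insert_of_mem hj), add_comm]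

theorem orbitSum_mem_radical (h : IsConstructionPair g γ) (p q : ℤ) {c : X}
    (hc : c ∈ h.radical) : orbitSum g p q c ∈ h.radical :=
  sum_mem fun _ _ => h.zpow_apply_mem_radical _ hc

theorem orbitSum_zero (h : IsConstructionPair g γ) (p q : ℤ) : orbitSum g p q 0 = 0 := by
  simp only [orbitSum, h.zpow_apply_zero, sum_const_zero]

theorem orbitSum_add_of_mem_radical (h : IsConstructionPair g γ) (p q : ℤ) (c : X) {d : X}
    (hd : d ∈ h.radical) : orbitSum g p q (c + d) = orbitSum g p q c + orbitSum g p q d := by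
  simp only [orbitSum, h.zpow_apply_add_of_mem_radical _ _ hd, sum_add_distrib]

theorem zpow_apply_orbitSum (h : IsConstructionPair g γ) (m p q : ℤ) {c : X}
    (hc : c ∈ h.radical) : (g ^ m) (orbitSum g p q c) = orbitSum g (p - m) (q - m) c := by
  rw [orbitSum, h.zpow_apply_sum_of_mem_radical _ _ fun _ _ => h.zpow_apply_mem_radical _ hc,
    ← orbitSum_zpow_apply, orbitSum]
  exact sum_congr rfl fun t _ => Equiv.Perm.zpow_apply_comm g m (-t)

theorem orbitSum_gamma_add (h : IsConstructionPair g γ) (p q r : ℤ) (x y : X) :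
    orbitSum g p q (γ x y) + orbitSum g q r (γ x y) = orbitSum g p r (γ x y) := by
  have two_torsion (t : ℤ) : (g ^ (-t)) (γ x y) + (g ^ (-t)) (γ x y) = 0 := by
    rw [← h.gamma_zpow_apply_left, h.gamma_add_self]
  rw [orbitSum, orbitSum, ← sum_symmDiff_of_add_self_eq_zero two_torsion, I_symmDiff_I, orbitSum]

theorem orbitSum_gamma_add_self (h : IsConstructionPair g γ) (p q : ℤ) (x y : X) :
    orbitSum g p q (γ x y) + orbitSum g p q (γ x y) = 0 := by
  nth_rw 2 [orbitSum_comm]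
  rw [h.orbitSum_gamma_add, orbitSum_self]

theorem inv_apply_add_apply (h : IsConstructionPair g γ) (a b : X) :
    g⁻¹ (g a + g b) = a + b + orbitSum g 0 3 (γ a b) := by
  rw [h.c1, orbitSum_zero_three, add_assoc (a + b), add_assoc (a + b)]

theorem apply_add (h : IsConstructionPair g γ) (a b : X) :
    g (a + b) = g a + g b + orbitSum g 2 (-1) (γ a b) := by
  have hab := h.gamma_mem_radical a b
  have hshift : g (orbitSum g 0 3 (γ a b)) = orbitSum g (-1) 2 (γ a b) := by
    simpa using h.zpow_apply_orbitSum 1 0 3 hab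
  have key := h.inv_apply_add_apply a b
  rw [Equiv.Perm.inv_eq_iff_eq, h.apply_add_of_mem_radical _ (h.orbitSum_mem_radical _ _ hab),
    hshift] at key
  rw [key, orbitSum_comm g 2, add_assoc, h.orbitSum_gamma_add_self, add_zero]

theorem inv_apply_add (h : IsConstructionPair g γ) (a b : X) :
    g⁻¹ (a + b) = g⁻¹ a + g⁻¹ b + orbitSum g (-2) 1 (γ a b) := by
  have hγ : γ (g⁻¹ a) (g⁻¹ b) = (g ^ (2 : ℤ)) (γ a b) := by
    rw [← zpow_neg_one, h.gamma_zpow_apply_left, h.gamma_zpow_apply_right,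
      ← Equiv.Perm.mul_apply, ← zpow_add]
    rfl
  have key := h.inv_apply_add_apply (g⁻¹ a) (g⁻¹ b)
  rw [hγ, orbitSum_zpow_apply] at key
  simpa using key

theorem zpow_apply_add (h : IsConstructionPair g γ) (n : ℤ) (a b : X) :
    (g ^ n) (a + b) = (g ^ n) a + (g ^ n) b + orbitSum g (2 * n) (-n) (γ a b) := by
  induction n using Int.add_induction generalizing a b with
  | one => simpa using h.apply_add a b
  | neg_one => simpa using h.inv_apply_add a b
  | add m n hm hn =>
    have hab := h.gamma_mem_radical a b
    have hγ : γ ((g ^ n) a) ((g ^ n) b) = (g ^ (-(2 * n))) (γ a b) := by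
      rw [h.gamma_zpow_apply_left, h.gamma_zpow_apply_right, ← Equiv.Perm.mul_apply, ← zpow_add]
      ring_nf
    rw [zpow_add, Equiv.Perm.mul_apply, hn,
      h.zpow_apply_add_of_mem_radical _ _ (h.orbitSum_mem_radical _ _ hab), hm, hγ,
      h.zpow_apply_orbitSum _ _ _ hab, orbitSum_zpow_apply, add_assoc,
      show -m - -(2 * n) = 2 * n - m by ring, h.orbitSum_gamma_add,
      show 2 * m - -(2 * n) = 2 * (m + n) by ring, show -n - m = -(m + n) by ring]
    rfl

theorem cmul_zero_of_mem_radical (h : IsConstructionPair g γ) (a : ℤ) (w : X) {c : X}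
    (hc : c ∈ h.radical) : cmul g γ (a, w) (0, c) = (a, w + c) := by
  rw [cmul_mk, add_zero, neg_zero, zpow_zero, hc w, h.orbitSum_zero, add_zero]
  rfl

theorem cmul_cmul_right (h : IsConstructionPair g γ) (i j k : ℤ) (x y z : X) :
    cmul g γ (i, x) (cmul g γ (j, y) (k, z)) =
      (i + j + k, (g ^ (-j - k)) x + (g ^ (-k)) y + z + orbitSum g (i + j) (-j - 2 * k) (γ x y)
        + orbitSum g (i + j + k) (-j - k) (γ x z) + orbitSum g (j + k) (-k) (γ y z)) := by
  have hγ : γ x ((g ^ (-k)) y + z + orbitSum g (j + k) (-k) (γ y z))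
      = (g ^ k) (γ x y) + γ x z := by
    rw [h.add_right, h.add_right, h.orbitSum_mem_radical _ _ (h.gamma_mem_radical y z) x,
      add_zero, h.gamma_zpow_apply_right, neg_neg]
  rw [cmul_mk j k, cmul_mk i (j + k), hγ,
    h.orbitSum_add_of_mem_radical _ _ _ (h.gamma_mem_radical x z), orbitSum_zpow_apply,
    show i + (j + k) - k = i + j by ring, show -(j + k) - k = -j - 2 * k by ring, ← add_assoc,
    neg_add']
  congr 1
  abel

theorem cmul_cmul_left (h : IsConstructionPair g γ) (i j k : ℤ) (x y z : X) :
    cmul g γ (cmul g γ (i, x) (j, y)) (k, z) =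
      (i + j + k, (g ^ (-j - k)) x + (g ^ (-k)) y + z + orbitSum g (i + j + k) (-j - 2 * k) (γ x y)
        + orbitSum g (i + k) (-j - k) (γ x z) + orbitSum g (i + j + k) (-k) (γ y z)) := by
  have hxy := h.gamma_mem_radical x y
  have hw : (g ^ (-k)) ((g ^ (-j)) x + y + orbitSum g (i + j) (-j) (γ x y))
      = (g ^ (-j - k)) x + (g ^ (-k)) y + orbitSum g (i + j + k) (-j - 2 * k) (γ x y) := by
    rw [h.zpow_apply_add_of_mem_radical _ _ (h.orbitSum_mem_radical _ _ hxy), h.zpow_apply_add,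
      h.gamma_zpow_apply_left, orbitSum_zpow_apply, h.zpow_apply_orbitSum _ _ _ hxy,
      ← Equiv.Perm.mul_apply, ← zpow_add, add_assoc, show -k + -j = -j - k by ring,
      show 2 * -k - - -j = -j - 2 * k by ring, show - -k - - -j = k - j by ring,
      show i + j - -k = i + j + k by ring, show -j - -k = k - j by ring,
      orbitSum_comm g (i + j + k), h.orbitSum_gamma_add, orbitSum_comm g]
  have hγ : γ ((g ^ (-j)) x + y + orbitSum g (i + j) (-j) (γ x y)) z
      = (g ^ j) (γ x z) + γ y z := by
    rw [h.add_left, h.add_left,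
      h.gamma_eq_zero_of_mem_radical_left (h.orbitSum_mem_radical _ _ hxy) z,
      add_zero, h.gamma_zpow_apply_left, neg_neg]
  rw [cmul_mk i j, cmul_mk (i + j) k, hw, hγ,
    h.orbitSum_add_of_mem_radical _ _ _ (h.gamma_mem_radical y z), orbitSum_zpow_apply,
    show i + j + k - j = i + k by ring, show -k - j = -j - k by ring]
  congr 1
  abel

end IsConstructionPair

theorem stmt_11 {X : Type*} [AddCommGroup X] (g : Equiv.Perm X) (γ : X → X → X)
    (h : IsConstructionPair g γ) (i j k : ℤ) (x y z : X)
    (u : X)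
    (hu : u = (∑ t ∈ I (i + j) (i + j + k), (g ^ (-t)) (γ x y))
        + (∑ t ∈ I (i + k) (i + j + k), (g ^ (-t)) (γ x z))
        + (∑ t ∈ I (j + k) (i + j + k), (g ^ (-t)) (γ y z))) :
    cmul g γ (cmul g γ (i, x) (cmul g γ (j, y) (k, z))) ((0 : ℤ), u)
      = cmul g γ (cmul g γ (i, x) (j, y)) (k, z) := by
  change u = orbitSum g (i + j) (i + j + k) (γ x y) + orbitSum g (i + k) (i + j + k) (γ x z)
    + orbitSum g (j + k) (i + j + k) (γ y z) at hu
  have hu_mem : u ∈ h.radical := hu ▸ add_mem (add_mem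
    (h.orbitSum_mem_radical _ _ (h.gamma_mem_radical x y))
    (h.orbitSum_mem_radical _ _ (h.gamma_mem_radical x z)))
    (h.orbitSum_mem_radical _ _ (h.gamma_mem_radical y z))
  rw [h.cmul_cmul_right, h.cmul_zero_of_mem_radical _ _ hu_mem, h.cmul_cmul_left, hu,
    ← h.orbitSum_gamma_add (i + j + k) (i + j) (-j - 2 * k),
    ← h.orbitSum_gamma_add (i + k) (i + j + k) (-j - k),
    ← h.orbitSum_gamma_add (i + j + k) (j + k) (-k),
    orbitSum_comm g (i + j + k) (i + j), orbitSum_comm g (i + j + k) (j + k)]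
  congr 1
  abel
end
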